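/- Suppose the underlying network G is a tree. Then for any node v ∈ V, the most likely elapsed time is d̄(v, V_e), and a most likely infection path for v (maximizing P_v jointly over all feasible elapsed times t ∈ 𝒯_v and all consistent infection paths) is the latest infection path for (v, d̄(v, V_e)). -/

import Mathlib

open scoped Classical

namespace SILimited

/-- The possible states of a node in the discrete-time SI model with limited observations:
susceptible, non-susceptible, infected (non-explicit), and explicit. -/
inductive NodeState : Type
  | susceptible : NodeState
  | nonsusceptible : NodeState
  | infected : NodeState
  | explicitN : NodeState
  deriving DecidableEq

/-- A node state counts as infected if it is infected (non-explicit) or explicit. -/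
def NodeState.IsInfected : NodeState → Prop
  | .infected => True
  | .explicitN => True
  | _ => False

variable {V : Type*}

/-- One-time-slot transition probability of a single node `u` with explicit probability `qu`,
infection probability `p`: a susceptible node stays susceptible w.p. `1 - p`, becomes infected
non-explicit w.p. `p * (1 - qu)`, becomes explicit w.p. `p * qu`; infected (resp. explicit)
nodes stay infected (resp. explicit), and non-susceptible nodes remain uninfected w.p. one. -/
def transProb (p qu : ℝ) : NodeState → NodeState → ℝ
  | .susceptible, .susceptible => 1 - p
  | .susceptible, .infected => p * (1 - qu)
  | .susceptible, .explicitN => p * qu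
  | .nonsusceptible, .nonsusceptible => 1
  | .nonsusceptible, .susceptible => 1
  | .infected, .infected => 1
  | .explicitN, .explicitN => 1
  | _, _ => 0

/-- Probability `P_v(X^t)` of an infection path `X` over elapsed time `t` given source `v`:
the product over nodes and time slots of the one-slot transition probabilities, together with
the factor for whether the source is explicit or not. -/
noncomputable def pathProb (p : ℝ) (q : V → ℝ) (v : V) (t : ℕ) (X : V → ℕ → NodeState) : ℝ :=
  (if X v 0 = .explicitN then q v else 1 - q v) *
    ∏ᶠ u : V, ∏ τ ∈ Finset.range t, transProb p (q u) (X u τ) (X u (τ + 1))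

/-- `X` is a valid infection path over times `0, 1, …, t` for the SI dynamics on `G`
with (single) infection source `v`. -/
structure IsInfectionPath (G : SimpleGraph V) (v : V) (t : ℕ) (X : V → ℕ → NodeState) : Prop where
  source_infected : (X v 0).IsInfected
  init_uninfected : ∀ u, u ≠ v → ¬ (X u 0).IsInfected
  susceptible_iff : ∀ u, ∀ τ ≤ t, ¬ (X u τ).IsInfected →
    (X u τ = .susceptible ↔ ∃ w, G.Adj u w ∧ (X w τ).IsInfected)
  infected_stays : ∀ u, ∀ τ, τ < t → X u τ = .infected → X u (τ + 1) = .infected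
  explicit_stays : ∀ u, ∀ τ, τ < t → X u τ = .explicitN → X u (τ + 1) = .explicitN
  infect_from_susceptible : ∀ u, ∀ τ, τ < t → (X u (τ + 1)).IsInfected →
    (X u τ).IsInfected ∨ X u τ = .susceptible

/-- An infection path `X^t` is consistent with the observed explicit set `Ve` if the nodes
explicit at time `t` are exactly those of `Ve`. -/
def ConsistentWith (Ve : Set V) (t : ℕ) (X : V → ℕ → NodeState) : Prop :=
  ∀ u, X u t = .explicitN ↔ u ∈ Ve

/-- The set `𝒳_v` of infection paths with source `v` and elapsed time `t` consistent with `Ve`. -/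
def pathsFor (G : SimpleGraph V) (Ve : Set V) (v : V) (t : ℕ) : Set (V → ℕ → NodeState) :=
  {X | IsInfectionPath G v t X ∧ ConsistentWith Ve t X}

/-- The set `𝒯_v` of feasible elapsed times for source `v`. -/
def feasibleTimes (G : SimpleGraph V) (Ve : Set V) (v : V) : Set ℕ :=
  {t | (pathsFor G Ve v t).Nonempty}

/-- `X` is a most likely infection path for `(v, t)`: it is a consistent infection path and
maximizes `P_v` over `𝒳_v` at elapsed time `t`. -/
def IsMostLikely (G : SimpleGraph V) (p : ℝ) (q : V → ℝ) (Ve : Set V) (v : V) (t : ℕ)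
    (X : V → ℕ → NodeState) : Prop :=
  X ∈ pathsFor G Ve v t ∧ ∀ Y ∈ pathsFor G Ve v t, pathProb p q v t Y ≤ pathProb p q v t X

/-- `d̄(v, A) = max_{u ∈ A} d(v, u)`. -/
noncomputable def dbar (G : SimpleGraph V) (v : V) (A : Set V) : ℕ :=
  sSup (G.dist v '' A)

/-- Vertex set of the subtree `T_u(v;G)` rooted at `u` with the first edge of the path from
`u` to `v` removed: in a tree these are the vertices `w` whose path from `v` passes through `u`. -/
def subtreeAway (G : SimpleGraph V) (u v : V) : Set V :=
  {w | G.dist v w = G.dist v u + G.dist u w}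

/-- Vertex set of the minimal connected subtree of the tree `G` spanning `S`: the vertices
lying on a path between two vertices of `S`. -/
def spanVerts (G : SimpleGraph V) (S : Set V) : Set V :=
  {w | ∃ a ∈ S, ∃ b ∈ S, G.dist a b = G.dist a w + G.dist w b}

/-- The first infection time of node `u` in the infection path `X`. -/
noncomputable def firstInfection (X : V → ℕ → NodeState) (u : V) : ℕ :=
  sInf {τ | (X u τ).IsInfected}

/-- The latest infection path for `(v, t)`: a consistent infection path in which every node
outside the minimal connected subtree `H` spanning `Ve ∪ {v}` remains uninfected for all
`τ ≤ t`, and every `u ∈ H \ {v}` first becomes infected at time `t - d̄(u, T_u(v;H))`. -/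
def IsLatestPath (G : SimpleGraph V) (Ve : Set V) (v : V) (t : ℕ)
    (X : V → ℕ → NodeState) : Prop :=
  IsInfectionPath G v t X ∧ ConsistentWith Ve t X ∧
  (∀ u, u ∉ spanVerts G (Ve ∪ {v}) → ∀ τ ≤ t, ¬ (X u τ).IsInfected) ∧
  (∀ u ∈ spanVerts G (Ve ∪ {v}), u ≠ v →
    firstInfection X u = t - dbar G u (subtreeAway G u v ∩ spanVerts G (Ve ∪ {v})))

end SILimited

/-!
On a tree, a consistent path `Y` with elapsed time `t` has probability
`C · ∏_{u ∈ Ve \ {v}} p q_u · ∏_{u ∈ J_Y} p (1 - q_u) · (1 - p) ^ M_Y`, where `J_Y` is the set of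
non-explicit infected nodes other than `v` at time `t` and `M_Y` counts the slots in which a node
stays susceptible. Every susceptible node either stays susceptible or gets infected, so
`M_Y + |I_t| = 1 + ∑_{τ < t} |∂ I_τ|` for the infected subtrees `I_τ`. The latest path `X` infects
every node as late as consistency allows, so its infected subtrees sit inside time-shifted infected
subtrees of `Y`; when all degrees are at least two, the boundary of a subtree containing `v` grows
with the subtree. Hence `J_X ⊆ J_Y` and `M_X + |J_X| ≤ M_Y + |J_Y|`, and since `q_u ≥ 2 - 1/p`
means `p (1 - q_u) ≤ 1 - p`, trading every extra node of `J_Y` for a factor `1 - p` gives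
`P(Y) ≤ P(X)`. The elapsed time `d̄(v, Ve)` is feasible: let the infection run at full speed along
the span of `Ve ∪ {v}`.
-/

lemma Finset.sum_range_tsub_of_le {f : ℕ → ℕ} {n : ℕ} (hf : ∀ i < n, f i ≤ f (i + 1)) :
    ∑ i ∈ Finset.range n, (f (i + 1) - f i) = f n - f 0 := by
  induction n with
  | zero => simp
  | succ n ih =>
    have hmono : ∀ m ≤ n, f 0 ≤ f m := by
      intro m hm
      induction m with
      | zero => rfl
      | succ m ihm => exact (ihm (by omega)).trans (hf m (by omega))
    rw [Finset.sum_range_succ, ih fun i hi => hf i (by omega)]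
    have := hf n (by omega)
    have := hmono n le_rfl
    omega

lemma Finset.prod_mul_pow_le_prod_mul_pow {ι : Type*} {s t : Finset ι} {f : ι → ℝ} {r : ℝ}
    {m n : ℕ} (hst : s ⊆ t) (hf₀ : ∀ i ∈ t, 0 ≤ f i) (hfr : ∀ i ∈ t, f i ≤ r) (hr₀ : 0 ≤ r)
    (hr₁ : r ≤ 1) (hmn : m + s.card ≤ n + t.card) :
    (∏ i ∈ t, f i) * r ^ n ≤ (∏ i ∈ s, f i) * r ^ m := by
  have hcard := Finset.card_sdiff_add_card_eq_card hst
  have hs₀ : 0 ≤ ∏ i ∈ s, f i := Finset.prod_nonneg fun i hi => hf₀ i (hst hi)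
  calc (∏ i ∈ t, f i) * r ^ n
      = (∏ i ∈ t \ s, f i) * (∏ i ∈ s, f i) * r ^ n := by rw [Finset.prod_sdiff hst]
    _ ≤ r ^ (t \ s).card * (∏ i ∈ s, f i) * r ^ n := by
        refine mul_le_mul_of_nonneg_right (mul_le_mul_of_nonneg_right ?_ hs₀) (pow_nonneg hr₀ n)
        rw [← Finset.prod_const]
        exact Finset.prod_le_prod (fun i hi => hf₀ i (Finset.sdiff_subset hi))
          fun i hi => hfr i (Finset.sdiff_subset hi)
    _ = (∏ i ∈ s, f i) * r ^ ((t \ s).card + n) := by ring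
    _ ≤ (∏ i ∈ s, f i) * r ^ m :=
        mul_le_mul_of_nonneg_left (pow_le_pow_of_le_one hr₀ hr₁ (by omega)) hs₀

lemma mul_one_sub_le_one_sub {p q : ℝ} (hp : 0 < p) (hq : 2 - 1 / p ≤ q) : p * (1 - q) ≤ 1 - p := by
  have : p * (2 - 1 / p) ≤ p * q := mul_le_mul_of_nonneg_left hq hp.le
  rw [mul_sub, mul_one_div_cancel hp.ne'] at this
  linarith

namespace SimpleGraph

variable {V : Type*} {G : SimpleGraph V} {v : V}

def Between (G : SimpleGraph V) (a x b : V) : Prop :=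
  G.dist a x + G.dist x b = G.dist a b

lemma Between.symm {a x b : V} (h : G.Between a x b) : G.Between b x a := by
  have : G.dist b x = G.dist x b := dist_comm
  have : G.dist x a = G.dist a x := dist_comm
  have : G.dist b a = G.dist a b := dist_comm
  unfold Between at *
  omega

lemma Between.trans {x u a : V} (hc : G.Connected) (hx : G.Between v x u)
    (hu : G.Between v u a) : G.Between v x a := by
  have : G.dist x a ≤ G.dist x u + G.dist u a := hc.dist_triangle
  have : G.dist v a ≤ G.dist v x + G.dist x a := hc.dist_triangle
  unfold Between at *
  omega

lemma between_of_adj_of_dist_add_one {w x : V} (hadj : G.Adj x w)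
    (hd : G.dist v w + 1 = G.dist v x) : G.Between v w x := by
  unfold Between
  rw [dist_eq_one_iff_adj.2 hadj.symm, hd]

lemma Connected.exists_adj_dist_add_one {r u : V} (hc : G.Connected) (h : u ≠ r) :
    ∃ w, G.Adj u w ∧ G.dist r w + 1 = G.dist r u := by
  obtain ⟨Q, hQ⟩ := hc.exists_walk_length_eq_dist u r
  cases Q with
  | nil => exact absurd rfl h
  | @cons _ w _ hadj Q' =>
    refine ⟨w, hadj, ?_⟩
    have : G.dist w r ≤ Q'.length := dist_le _
    have : G.dist u r ≤ G.dist u w + G.dist w r := hc.dist_triangle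
    have : G.dist u w = 1 := dist_eq_one_iff_adj.2 hadj
    rw [dist_comm (u := r), dist_comm (u := r)]
    simp only [Walk.length_cons] at hQ
    omega

namespace IsTree

variable (hT : G.IsTree)
include hT

lemma eq_of_isPath {a b : V} {P Q : G.Walk a b} (hP : P.IsPath) (hQ : Q.IsPath) : P = Q :=
  have := hT.isAcyclic.subsingleton_path a b
  congrArg Subtype.val (Subsingleton.elim (α := G.Path a b) ⟨P, hP⟩ ⟨Q, hQ⟩)

lemma length_eq_dist_of_isPath {a b : V} {P : G.Walk a b} (hP : P.IsPath) :
    P.length = G.dist a b := by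
  obtain ⟨Q, hQ, hQlen⟩ := hT.connected.exists_path_of_dist a b
  rw [hT.eq_of_isPath hP hQ, hQlen]

lemma mem_support_iff_between {a b x : V} {P : G.Walk a b} (hP : P.IsPath) :
    x ∈ P.support ↔ G.Between a x b := by
  constructor
  · intro hx
    have htake := hT.length_eq_dist_of_isPath (hP.takeUntil hx)
    have hdrop := hT.length_eq_dist_of_isPath (hP.dropUntil hx)
    have hlen := congrArg Walk.length (P.take_spec hx)
    rw [Walk.length_append, hT.length_eq_dist_of_isPath hP] at hlen
    unfold Between
    omega
  · intro hx
    obtain ⟨P₁, hP₁⟩ := hT.connected.exists_walk_length_eq_dist a x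
    obtain ⟨P₂, hP₂⟩ := hT.connected.exists_walk_length_eq_dist x b
    have hgeod : (P₁.append P₂).length = G.dist a b := by
      rw [Walk.length_append, hP₁, hP₂]; exact hx
    rw [← hT.eq_of_isPath ((P₁.append P₂).isPath_of_length_eq_dist hgeod) hP,
      Walk.mem_support_append_iff]
    exact Or.inl P₁.end_mem_support

lemma between_or_between {a b x : V} (h : G.Between a x b) (v : V) :
    G.Between v x a ∨ G.Between v x b := by
  -- the geodesic from `a` to `b` is the bypass of the walk `a → v → b`
  obtain ⟨P₁, hP₁, -⟩ := hT.connected.exists_path_of_dist a v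
  obtain ⟨P₂, hP₂, -⟩ := hT.connected.exists_path_of_dist v b
  have hx : x ∈ (P₁.append P₂).bypass.support :=
    (hT.mem_support_iff_between (Walk.bypass_isPath _)).2 h
  rcases (Walk.mem_support_append_iff _ _).1 (Walk.support_bypass_subset_support _ hx) with h₁ | h₂
  · exact Or.inl ((hT.mem_support_iff_between hP₁).1 h₁).symm
  · exact Or.inr ((hT.mem_support_iff_between hP₂).1 h₂)

lemma between_of_dist_le {w x y : V} (hx : G.Between v x w) (hy : G.Between v y w)
    (hd : G.dist v x ≤ G.dist v y) : G.Between v x y := by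
  obtain ⟨P, hP, -⟩ := hT.connected.exists_path_of_dist v w
  have hxP : x ∈ P.support := (hT.mem_support_iff_between hP).2 hx
  have hyP : y ∈ P.support := (hT.mem_support_iff_between hP).2 hy
  rw [← P.take_spec hyP, Walk.mem_support_append_iff] at hxP
  rcases hxP with h | h
  · exact (hT.mem_support_iff_between (hP.takeUntil hyP)).1 h
  · have hyxw := (hT.mem_support_iff_between (hP.dropUntil hyP)).1 h
    have : G.dist v y ≤ G.dist v x + G.dist x y := hT.connected.dist_triangle
    have : G.dist y x = G.dist x y := dist_comm
    unfold Between at *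
    have hxy : x = y := hT.connected.dist_eq_zero_iff.1 (by omega)
    subst hxy
    simp

lemma between_of_adj_of_adj {x y z : V} (hy : G.Adj x y) (hz : G.Adj x z) (hne : y ≠ z) :
    G.Between y x z := by
  have hP : (Walk.cons hy.symm (Walk.cons hz Walk.nil)).IsPath := by
    simp [Walk.cons_isPath_iff, hz.ne, hy.ne', hne]
  exact (hT.mem_support_iff_between hP).1 (by simp)

end IsTree

lemma Connected.finite_setOf_dist_le (hc : G.Connected) (hloc : ∀ u, (G.neighborSet u).Finite)
    (v : V) (n : ℕ) : {u | G.dist v u ≤ n}.Finite := by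
  induction n with
  | zero =>
    refine (Set.finite_singleton v).subset fun u hu => ?_
    exact (hc.dist_eq_zero_iff.1 (Nat.le_zero.1 hu)).symm
  | succ n ih =>
    refine (ih.union (ih.biUnion fun w _ => hloc w)).subset fun u hu => ?_
    by_cases huv : u = v
    · subst huv; exact Or.inl (by simp)
    obtain ⟨w, hadj, hw⟩ := hc.exists_adj_dist_add_one huv
    by_cases hun : G.dist v u ≤ n
    · exact Or.inl hun
    · have hu' : G.dist v u ≤ n + 1 := hu
      have hw' : G.dist v w ≤ n := by omega
      exact Or.inr (Set.mem_biUnion hw' hadj.symm)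

/-- In a tree these are exactly the vertex sets of the subtrees containing `v`. -/
def IsRootedSubtree (G : SimpleGraph V) (v : V) (W : Set V) : Prop :=
  v ∈ W ∧ ∀ w ∈ W, ∀ x, G.Between v x w → x ∈ W

def outerBoundary (G : SimpleGraph V) (W : Set V) : Set V :=
  {x | x ∉ W ∧ ∃ y ∈ W, G.Adj x y}

lemma outerBoundary_finite (hloc : ∀ u, (G.neighborSet u).Finite) {W : Set V}
    (hW : W.Finite) : (G.outerBoundary W).Finite :=
  (hW.biUnion fun y _ => hloc y).subset fun _ ⟨_, _, hy, hadj⟩ => Set.mem_biUnion hy hadj.symm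

namespace IsRootedSubtree

variable {W : Set V}

lemma eq_of_adj_of_adj (hT : G.IsTree) (hW : G.IsRootedSubtree v W) {x y z : V} (hx : x ∉ W)
    (hy : y ∈ W) (hz : z ∈ W) (hxy : G.Adj x y) (hxz : G.Adj x z) : y = z := by
  by_contra hne
  rcases hT.between_or_between (hT.between_of_adj_of_adj hxy hxz hne) v with h | h
  · exact hx (hW.2 y hy x h)
  · exact hx (hW.2 z hz x h)

lemma insert_of_adj (hT : G.IsTree) (hW : G.IsRootedSubtree v W) {x w : V} (hw : w ∈ W)
    (hadj : G.Adj x w) (hd : G.dist v w + 1 = G.dist v x) :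
    G.IsRootedSubtree v (insert x W) := by
  refine ⟨Set.mem_insert_of_mem _ hW.1, fun y hy z hz => ?_⟩
  rcases hy with rfl | hy
  · by_cases hzy : z = y
    · exact hzy ▸ Set.mem_insert _ _
    have hwy : G.Between v w y := between_of_adj_of_dist_add_one hadj hd
    have : G.dist z y ≠ 0 := dist_ne_zero_iff_ne_and_reachable.2 ⟨hzy, hT.connected z y⟩
    have hzw : G.dist v z ≤ G.dist v w := by unfold Between at hz; omega
    exact Set.mem_insert_of_mem _ (hW.2 w hw z (hT.between_of_dist_le hz hwy hzw))
  · exact Set.mem_insert_of_mem _ (hW.2 y hy z hz)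

lemma exists_insert (hT : G.IsTree) (hW : G.IsRootedSubtree v W) {W' : Set V}
    (hW' : G.IsRootedSubtree v W') (hfin : W'.Finite) (hne : (W' \ W).Nonempty) :
    ∃ x ∈ W' \ W, G.IsRootedSubtree v (insert x W) := by
  obtain ⟨x, hx, hmin⟩ := (W' \ W).exists_min_image (G.dist v) hfin.sdiff hne
  have hxv : x ≠ v := fun h => hx.2 (h ▸ hW.1)
  obtain ⟨w, hadj, hd⟩ := hT.connected.exists_adj_dist_add_one hxv
  have hwW' : w ∈ W' := hW'.2 x hx.1 w (between_of_adj_of_dist_add_one hadj hd)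
  have hwW : w ∈ W := by
    by_contra hwW
    have := hmin w ⟨hwW', hwW⟩
    omega
  exact ⟨x, hx, hW.insert_of_adj hT hwW hadj hd⟩

/-- Adding a leaf `x` removes `x` from the boundary but adds its remaining neighbours, of which
there is at least one because `x` has degree at least two and only one neighbour in `W`. -/
lemma ncard_outerBoundary_le_insert (hT : G.IsTree) (hloc : ∀ u, (G.neighborSet u).Finite)
    (hdeg : ∀ u, 2 ≤ (G.neighborSet u).ncard) (hW : G.IsRootedSubtree v W) {x : V}
    (hWx : G.IsRootedSubtree v (insert x W)) (hx : x ∉ W) (hfin : W.Finite) :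
    (G.outerBoundary W).ncard ≤ (G.outerBoundary (insert x W)).ncard := by
  set A := G.outerBoundary W \ {x}
  set B := G.neighborSet x \ insert x W
  have hAfin : A.Finite := (outerBoundary_finite hloc hfin).sdiff
  have hBfin : B.Finite := (hloc x).sdiff
  have hAB : A ∪ B ⊆ G.outerBoundary (insert x W) := by
    rintro y (⟨⟨hyW, z, hz, hyz⟩, hyx⟩ | ⟨hxy, hyW⟩)
    · exact ⟨by simp_all, z, Set.mem_insert_of_mem _ hz, hyz⟩
    · exact ⟨hyW, x, Set.mem_insert _ _, hxy.symm⟩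
  have hdisj : Disjoint A B := by
    rw [Set.disjoint_left]
    rintro y ⟨⟨-, z, hz, hyz⟩, -⟩ ⟨hxy, hyW⟩
    have hzx : z = x := (hWx.eq_of_adj_of_adj hT hyW (Set.mem_insert_of_mem _ hz)
      (Set.mem_insert _ _) hyz (hxy.symm))
    exact hx (hzx ▸ hz)
  have hA : (G.outerBoundary W).ncard ≤ A.ncard + 1 :=
    (Set.ncard_le_ncard (fun y hy => by by_cases hyx : y = x <;> simp_all [A])
      (hAfin.insert x)).trans (Set.ncard_insert_le x A)
  have hB : 1 ≤ B.ncard := by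
    obtain ⟨y, z, hy, hz, hyz⟩ := (Set.one_lt_ncard_iff (hloc x)).1 (hdeg x)
    refine Nat.one_le_iff_ne_zero.2 fun hB => ?_
    have hN : G.neighborSet x ⊆ W := fun w hw => by
      have : w ∈ insert x W := by
        by_contra hw'
        exact ((Set.ncard_eq_zero hBfin).1 hB).subset ⟨hw, hw'⟩
      exact this.resolve_left (G.ne_of_adj hw).symm
    exact hyz (hW.eq_of_adj_of_adj hT hx (hN hy) (hN hz) hy hz)
  have := Set.ncard_le_ncard hAB (outerBoundary_finite hloc (hfin.insert x))
  rw [Set.ncard_union_eq hdisj hAfin hBfin] at this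
  omega

lemma ncard_outerBoundary_mono (hT : G.IsTree) (hloc : ∀ u, (G.neighborSet u).Finite)
    (hdeg : ∀ u, 2 ≤ (G.neighborSet u).ncard) (hW : G.IsRootedSubtree v W) {W' : Set V}
    (hW' : G.IsRootedSubtree v W') (hsub : W ⊆ W') (hfin : W'.Finite) :
    (G.outerBoundary W).ncard ≤ (G.outerBoundary W').ncard := by
  induction hn : (W' \ W).ncard generalizing W with
  | zero =>
    rw [Set.Subset.antisymm hsub (Set.sdiff_eq_empty.1 ((Set.ncard_eq_zero hfin.sdiff).1 hn))]
  | succ n ih =>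
    obtain ⟨x, hx, hWx⟩ :=
      hW.exists_insert hT hW' hfin (Set.nonempty_of_ncard_ne_zero (by omega))
    have hn' : (W' \ insert x W).ncard = n := by
      rw [Set.insert_eq, Set.union_comm, ← Set.sdiff_sdiff,
        Set.ncard_sdiff_singleton_of_mem hx, hn, Nat.add_sub_cancel]
    exact (ncard_outerBoundary_le_insert hT hloc hdeg hW hWx hx.2 (hfin.subset hsub)).trans
      (ih hWx (Set.insert_subset hx.1 hsub) hn')

end IsRootedSubtree

end SimpleGraph

namespace SILimited

open SimpleGraph Finset

variable {V : Type*} {G : SimpleGraph V} {v : V} {S Ve : Set V} {t : ℕ}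
  {X Y Z : V → ℕ → NodeState}

lemma NodeState.isInfected_iff (s : NodeState) :
    s.IsInfected ↔ s = .infected ∨ s = .explicitN := by
  cases s <;> simp [NodeState.IsInfected]

lemma NodeState.not_isInfected_iff (s : NodeState) :
    ¬ s.IsInfected ↔ s = .susceptible ∨ s = .nonsusceptible := by
  cases s <;> simp [NodeState.IsInfected]

@[simp] lemma NodeState.not_isInfected_susceptible : ¬ NodeState.susceptible.IsInfected := id

@[simp] lemma NodeState.not_isInfected_nonsusceptible : ¬ NodeState.nonsusceptible.IsInfected :=
  id

@[simp] lemma NodeState.isInfected_infected : NodeState.infected.IsInfected := trivial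

@[simp] lemma NodeState.isInfected_explicitN : NodeState.explicitN.IsInfected := trivial

lemma ConsistentWith.isInfected (hcons : ConsistentWith Ve t Z) {u : V} (hu : u ∈ Ve) :
    (Z u t).IsInfected := by
  simp [(hcons u).2 hu]

def infectedSet (Z : V → ℕ → NodeState) (τ : ℕ) : Set V :=
  {u | (Z u τ).IsInfected}

def staysSusceptibleSet (Z : V → ℕ → NodeState) (τ : ℕ) : Set V :=
  {u | Z u τ = .susceptible ∧ Z u (τ + 1) = .susceptible}

/-- The exponent of `1 - p` in `pathProb`. -/
noncomputable def staysSusceptibleCount (Z : V → ℕ → NodeState) (t : ℕ) : ℕ :=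
  ∑ τ ∈ range t, (staysSusceptibleSet Z τ).ncard

lemma disjoint_staysSusceptibleSet_sdiff (τ : ℕ) :
    Disjoint (staysSusceptibleSet Z τ) (infectedSet Z (τ + 1) \ infectedSet Z τ) := by
  rw [Set.disjoint_left]
  rintro u ⟨-, h⟩ ⟨h', -⟩
  simp [infectedSet, h] at h'

def stateIndicator (s : NodeState) (Z : V → ℕ → NodeState) (u : V) (τ : ℕ) : ℕ :=
  if Z u τ = s then 1 else 0

lemma mem_spanVerts_of_mem {a : V} (ha : a ∈ S) : a ∈ spanVerts G S :=
  ⟨a, ha, a, ha, by simp⟩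

lemma mem_subtreeAway_iff {u w : V} : w ∈ subtreeAway G u v ↔ G.Between v u w := eq_comm

lemma exists_between_of_mem_spanVerts (hT : G.IsTree) {u : V} (hu : u ∈ spanVerts G S) (v : V) :
    ∃ a ∈ S, G.Between v u a := by
  obtain ⟨a, ha, b, hb, hab⟩ := hu
  rcases hT.between_or_between (a := a) (b := b) hab.symm v with h | h
  · exact ⟨a, ha, h⟩
  · exact ⟨b, hb, h⟩

lemma mem_spanVerts_of_between (hT : G.IsTree) (hv : v ∈ S) {u x : V} (hu : u ∈ spanVerts G S)
    (hx : G.Between v x u) : x ∈ spanVerts G S := by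
  obtain ⟨a, ha, hua⟩ := exists_between_of_mem_spanVerts hT hu v
  exact ⟨v, hv, a, ha, Eq.symm (hx.trans hT.connected hua)⟩

lemma exists_between_dist_le (hT : G.IsTree) {u w : V} (hu : u ∈ spanVerts G S) (huv : u ≠ v)
    (hw : w ∈ spanVerts G S) (huw : G.Between v u w) :
    ∃ c ∈ S, c ≠ v ∧ G.Between v u c ∧ G.dist u w ≤ G.dist u c := by
  have hvu : G.dist v u ≠ 0 := dist_ne_zero_iff_ne_and_reachable.2 ⟨huv.symm, hT.connected v u⟩
  suffices ∃ c ∈ S, G.Between v u c ∧ G.dist u w ≤ G.dist u c by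
    obtain ⟨c, hc, huc, hd⟩ := this
    refine ⟨c, hc, fun hcv => ?_, huc, hd⟩
    subst hcv
    unfold Between at huc
    rw [dist_self] at huc
    omega
  by_cases hwu : w = u
  · obtain ⟨c, hc, huc⟩ := exists_between_of_mem_spanVerts hT hu v
    exact ⟨c, hc, huc, by simp [hwu]⟩
  obtain ⟨c, hc, hwc⟩ := exists_between_of_mem_spanVerts hT hw u
  have hwc : G.Between u w c := hwc
  rcases hT.between_or_between hwc v with h | h
  · have : G.dist w u = G.dist u w := dist_comm
    have : G.dist u w ≠ 0 := dist_ne_zero_iff_ne_and_reachable.2 ⟨Ne.symm hwu, hT.connected u w⟩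
    unfold Between at h huw
    omega
  · refine ⟨c, hc, huw.trans hT.connected h, ?_⟩
    unfold Between at hwc
    omega

lemma dist_le_dbar (hVefin : Ve.Finite) {a : V} (ha : a ∈ Ve ∪ {v}) :
    G.dist v a ≤ dbar G v Ve := by
  rcases ha with ha | rfl
  · exact le_csSup (hVefin.image _).bddAbove (Set.mem_image_of_mem _ ha)
  · simp

lemma dist_le_dbar_of_mem_spanVerts (hT : G.IsTree) (hVefin : Ve.Finite) {u : V}
    (hu : u ∈ spanVerts G (Ve ∪ {v})) : G.dist v u ≤ dbar G v Ve := by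
  obtain ⟨a, ha, hua⟩ := exists_between_of_mem_spanVerts hT hu v
  have := dist_le_dbar (G := G) hVefin ha
  unfold Between at hua
  omega

lemma dbar_subtreeAway_add_dist_le (hT : G.IsTree) (hVefin : Ve.Finite) {u : V}
    (hu : u ∈ spanVerts G (Ve ∪ {v})) :
    dbar G u (subtreeAway G u v ∩ spanVerts G (Ve ∪ {v})) + G.dist v u ≤ dbar G v Ve := by
  refine Nat.add_le_of_le_sub (dist_le_dbar_of_mem_spanVerts hT hVefin hu)
    (csSup_le ⟨_, u, ⟨mem_subtreeAway_iff.2 (by simp [Between]), hu⟩, rfl⟩ ?_)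
  rintro _ ⟨w, ⟨huw, hw⟩, rfl⟩
  have := dist_le_dbar_of_mem_spanVerts hT hVefin hw
  rw [mem_subtreeAway_iff] at huw
  unfold Between at huw
  omega

lemma exists_mem_dbar_subtreeAway_le (hT : G.IsTree) (hVefin : Ve.Finite) {u : V}
    (hu : u ∈ spanVerts G (Ve ∪ {v})) (huv : u ≠ v) :
    ∃ w ∈ Ve, G.Between v u w ∧
      dbar G u (subtreeAway G u v ∩ spanVerts G (Ve ∪ {v})) ≤ G.dist u w := by
  have hbdd : BddAbove (G.dist u '' (subtreeAway G u v ∩ spanVerts G (Ve ∪ {v}))) := by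
    refine ⟨dbar G v Ve, ?_⟩
    rintro _ ⟨w, ⟨huw, hw⟩, rfl⟩
    have := dist_le_dbar_of_mem_spanVerts hT hVefin hw
    rw [mem_subtreeAway_iff] at huw
    unfold Between at huw
    omega
  have hne : (G.dist u '' (subtreeAway G u v ∩ spanVerts G (Ve ∪ {v}))).Nonempty :=
    ⟨_, u, ⟨mem_subtreeAway_iff.2 (by simp [Between]), hu⟩, rfl⟩
  obtain ⟨w, ⟨huw, hw⟩, hwmax⟩ := Nat.sSup_mem hne hbdd
  obtain ⟨c, hc, hcv, huc, hd⟩ := exists_between_dist_le hT hu huv hw (mem_subtreeAway_iff.1 huw)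
  exact ⟨c, hc.resolve_right hcv, huc, hwmax.symm.trans_le hd⟩

namespace IsInfectionPath

variable (hZ : IsInfectionPath G v t Z)
include hZ

lemma isInfected_succ {u : V} {τ : ℕ} (hτ : τ < t) (h : (Z u τ).IsInfected) :
    (Z u (τ + 1)).IsInfected := by
  rcases (NodeState.isInfected_iff _).1 h with h | h
  · rw [hZ.infected_stays u τ hτ h]; trivial
  · rw [hZ.explicit_stays u τ hτ h]; trivial

lemma isInfected_mono {u : V} {τ τ' : ℕ} (hττ' : τ ≤ τ') (hτ' : τ' ≤ t)
    (h : (Z u τ).IsInfected) : (Z u τ').IsInfected := by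
  induction τ', hττ' using Nat.le_induction with
  | base => exact h
  | succ n _ ih => exact hZ.isInfected_succ (by omega) (ih (by omega))

lemma state_source {τ : ℕ} (hτ : τ ≤ t) : Z v τ = Z v 0 := by
  induction τ with
  | zero => rfl
  | succ n ih =>
    rw [← ih (by omega)]
    rcases (NodeState.isInfected_iff _).1 (ih (by omega) ▸ hZ.source_infected) with h | h
    · exact (hZ.infected_stays v n (by omega) h).trans h.symm
    · exact (hZ.explicit_stays v n (by omega) h).trans h.symm

lemma isInfected_source {τ : ℕ} (hτ : τ ≤ t) : (Z v τ).IsInfected :=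
  hZ.state_source hτ ▸ hZ.source_infected

lemma susceptible_of_isInfected_succ {u : V} {τ : ℕ} (hτ : τ < t)
    (h : (Z u (τ + 1)).IsInfected) (h' : ¬ (Z u τ).IsInfected) : Z u τ = .susceptible :=
  (hZ.infect_from_susceptible u τ hτ h).resolve_left h'

lemma exists_adj_isInfected {u : V} {τ : ℕ} (hτ : τ ≤ t) (h : Z u τ = .susceptible) :
    ∃ w, G.Adj u w ∧ (Z w τ).IsInfected :=
  (hZ.susceptible_iff u τ hτ (by simp [h])).1 h

lemma dist_le_of_isInfected (hc : G.Connected) {w : V} {τ : ℕ} (hτ : τ ≤ t)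
    (h : (Z w τ).IsInfected) : G.dist v w ≤ τ := by
  induction τ generalizing w with
  | zero =>
    by_cases hwv : w = v
    · simp [hwv]
    · exact absurd h (hZ.init_uninfected w hwv)
  | succ τ ih =>
    by_cases hwτ : (Z w τ).IsInfected
    · exact (ih (by omega) hwτ).trans (Nat.le_succ τ)
    obtain ⟨w', hadj, hw'⟩ :=
      hZ.exists_adj_isInfected (by omega) (hZ.susceptible_of_isInfected_succ hτ h hwτ)
    have : G.dist v w ≤ G.dist v w' + G.dist w' w := hc.dist_triangle
    rw [dist_comm (u := w'), dist_eq_one_iff_adj.2 hadj] at this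
    have := ih (by omega) hw'
    omega

lemma dist_le_of_susceptible (hc : G.Connected) {u : V} {τ : ℕ} (hτ : τ ≤ t)
    (h : Z u τ = .susceptible) : G.dist v u ≤ τ + 1 := by
  obtain ⟨w, hadj, hw⟩ := hZ.exists_adj_isInfected hτ h
  have : G.dist v u ≤ G.dist v w + G.dist w u := hc.dist_triangle
  rw [dist_comm (u := w), dist_eq_one_iff_adj.2 hadj] at this
  have := hZ.dist_le_of_isInfected hc hτ hw
  omega

lemma nonsusceptible_of_lt_dist (hc : G.Connected) {u : V} (hu : t + 1 < G.dist v u) {τ : ℕ}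
    (hτ : τ ≤ t) : Z u τ = .nonsusceptible := by
  have hni : ¬ (Z u τ).IsInfected := fun h => by
    have := hZ.dist_le_of_isInfected hc hτ h; omega
  refine ((NodeState.not_isInfected_iff _).1 hni).resolve_left fun h => ?_
  have := hZ.dist_le_of_susceptible hc hτ h
  omega

/-- Infection travels at most one edge per time slot. -/
lemma isInfected_of_between (hT : G.IsTree) {w x : V} {τ : ℕ} (hτ : τ ≤ t)
    (hw : (Z w τ).IsInfected) (hx : G.Between v x w) : (Z x (τ - G.dist x w)).IsInfected := by
  induction τ generalizing w x with
  | zero =>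
    have hwv : w = v := by_contra fun hne => hZ.init_uninfected w hne hw
    subst hwv
    have : G.dist w x = 0 := by unfold Between at hx; rw [dist_self] at hx; omega
    rw [hT.connected.dist_eq_zero_iff.1 this] at hw ⊢
    simpa using hw
  | succ τ ih =>
    by_cases hwτ : (Z w τ).IsInfected
    · have := ih (by omega) hwτ hx
      rcases Nat.lt_or_ge τ (G.dist x w) with h | h
      · exact hZ.isInfected_mono (by omega) (by omega) this
      · rw [show τ + 1 - G.dist x w = τ - G.dist x w + 1 by omega]
        exact hZ.isInfected_succ (by omega) this
    by_cases hxw : x = w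
    · subst hxw; simpa using hw
    obtain ⟨w', hadj, hw'⟩ :=
      hZ.exists_adj_isInfected (by omega) (hZ.susceptible_of_isInfected_succ hτ hw hwτ)
    rcases hT.dist_eq_dist_add_one_of_adj v hadj with hd | hd
    · have hw'w : G.Between v w' w := between_of_adj_of_dist_add_one hadj hd.symm
      have hxw' : G.Between v x w' := hT.between_of_dist_le hx hw'w (by
        have : G.dist x w ≠ 0 := dist_ne_zero_iff_ne_and_reachable.2 ⟨hxw, hT.connected x w⟩
        unfold Between at hx; omega)
      have := ih (by omega) hw' hxw'
      unfold Between at hx hxw'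
      rwa [show τ + 1 - G.dist x w = τ - G.dist x w' by omega]
    · have := ih (by omega) hw' (between_of_adj_of_dist_add_one hadj.symm hd.symm)
      exact absurd (hZ.isInfected_mono (Nat.sub_le τ _) (by omega) this) hwτ

lemma susceptible_or_isInfected_succ {u : V} {τ : ℕ} (hτ : τ < t) (h : Z u τ = .susceptible) :
    Z u (τ + 1) = .susceptible ∨ (Z u (τ + 1)).IsInfected := by
  refine or_iff_not_imp_right.2 fun hni => (hZ.susceptible_iff u (τ + 1) hτ hni).2 ?_
  obtain ⟨w, hadj, hw⟩ := hZ.exists_adj_isInfected hτ.le h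
  exact ⟨w, hadj, hZ.isInfected_succ hτ hw⟩

lemma infectedSet_finite (hc : G.Connected) (hloc : ∀ u, (G.neighborSet u).Finite) {τ : ℕ}
    (hτ : τ ≤ t) : (infectedSet Z τ).Finite :=
  (hc.finite_setOf_dist_le hloc v τ).subset fun _ hu => hZ.dist_le_of_isInfected hc hτ hu

lemma infectedSet_mono {τ τ' : ℕ} (hττ' : τ ≤ τ') (hτ' : τ' ≤ t) :
    infectedSet Z τ ⊆ infectedSet Z τ' :=
  fun _ hu => hZ.isInfected_mono hττ' hτ' hu

lemma infectedSet_zero : infectedSet Z 0 = {v} := by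
  ext u
  refine ⟨fun h => by_contra fun hne => hZ.init_uninfected u hne h, ?_⟩
  rintro rfl
  exact hZ.source_infected

lemma isRootedSubtree_infectedSet (hT : G.IsTree) {τ : ℕ} (hτ : τ ≤ t) :
    G.IsRootedSubtree v (infectedSet Z τ) :=
  ⟨hZ.isInfected_source hτ, fun _ hw _ hx =>
    hZ.isInfected_mono (Nat.sub_le _ _) hτ (hZ.isInfected_of_between hT hτ hw hx)⟩

lemma outerBoundary_infectedSet {τ : ℕ} (hτ : τ ≤ t) :
    G.outerBoundary (infectedSet Z τ) = {u | Z u τ = .susceptible} := by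
  ext u
  constructor
  · rintro ⟨hu, w, hw, hadj⟩
    exact (hZ.susceptible_iff u τ hτ hu).2 ⟨w, hadj, hw⟩
  · intro (h : Z u τ = .susceptible)
    obtain ⟨w, hadj, hw⟩ := hZ.exists_adj_isInfected hτ h
    exact ⟨by simp [infectedSet, h], w, hw, hadj⟩

lemma susceptible_eq_union {τ : ℕ} (hτ : τ < t) :
    {u | Z u τ = .susceptible} =
      staysSusceptibleSet Z τ ∪ (infectedSet Z (τ + 1) \ infectedSet Z τ) := by
  ext u
  constructor
  · intro (h : Z u τ = .susceptible)
    rcases hZ.susceptible_or_isInfected_succ hτ h with h' | h'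
    · exact Or.inl ⟨h, h'⟩
    · exact Or.inr ⟨h', by simp [infectedSet, h]⟩
  · rintro (⟨h, -⟩ | ⟨h, h'⟩)
    · exact h
    · exact hZ.susceptible_of_isInfected_succ hτ h h'

lemma ncard_infectedSet (hc : G.Connected) (hloc : ∀ u, (G.neighborSet u).Finite) {n : ℕ}
    (hn : n ≤ t) : (infectedSet Z n).ncard =
      1 + ∑ τ ∈ range n, (infectedSet Z (τ + 1) \ infectedSet Z τ).ncard := by
  induction n with
  | zero => simp [hZ.infectedSet_zero]
  | succ n ih =>
    rw [sum_range_succ, ← add_assoc, ← ih (by omega), ← Set.ncard_union_eq Set.disjoint_sdiff_right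
      (hZ.infectedSet_finite hc hloc (by omega)) (hZ.infectedSet_finite hc hloc hn).sdiff,
      Set.union_sdiff_cancel (hZ.infectedSet_mono (Nat.le_succ n) hn)]

lemma ncard_outerBoundary_infectedSet (hc : G.Connected) (hloc : ∀ u, (G.neighborSet u).Finite)
    {τ : ℕ} (hτ : τ < t) : (G.outerBoundary (infectedSet Z τ)).ncard =
      (staysSusceptibleSet Z τ).ncard + (infectedSet Z (τ + 1) \ infectedSet Z τ).ncard := by
  have hfin := outerBoundary_finite hloc (hZ.infectedSet_finite hc hloc hτ.le)
  rw [hZ.outerBoundary_infectedSet hτ.le, hZ.susceptible_eq_union hτ] at hfin ⊢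
  exact Set.ncard_union_eq (disjoint_staysSusceptibleSet_sdiff τ)
    (hfin.subset Set.subset_union_left) (hfin.subset Set.subset_union_right)

lemma staysSusceptibleCount_add_ncard_infectedSet (hc : G.Connected)
    (hloc : ∀ u, (G.neighborSet u).Finite) :
    staysSusceptibleCount Z t + (infectedSet Z t).ncard =
      ∑ τ ∈ range t, (G.outerBoundary (infectedSet Z τ)).ncard + 1 := by
  rw [hZ.ncard_infectedSet hc hloc le_rfl, sum_congr rfl fun τ hτ =>
    hZ.ncard_outerBoundary_infectedSet hc hloc (mem_range.1 hτ), sum_add_distrib,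
    staysSusceptibleCount]
  ring

lemma stateIndicator_le_succ {s : NodeState} (hs : s = .infected ∨ s = .explicitN) {u : V}
    {τ : ℕ} (hτ : τ < t) : stateIndicator s Z u τ ≤ stateIndicator s Z u (τ + 1) := by
  unfold stateIndicator
  split_ifs with h h' <;> try omega
  rcases hs with rfl | rfl
  · exact absurd (hZ.infected_stays u τ hτ h) h'
  · exact absurd (hZ.explicit_stays u τ hτ h) h'

/-- The exponents telescope over `τ`; by `stateIndicator_le_succ` no subtraction truncates. -/
lemma transProb_eq (p qu : ℝ) {u : V} {τ : ℕ} (hτ : τ < t) :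
    transProb p qu (Z u τ) (Z u (τ + 1)) =
      (1 - p) ^ (if Z u τ = .susceptible ∧ Z u (τ + 1) = .susceptible then 1 else 0) *
      (p * qu) ^ (stateIndicator .explicitN Z u (τ + 1) - stateIndicator .explicitN Z u τ) *
      (p * (1 - qu)) ^ (stateIndicator .infected Z u (τ + 1) - stateIndicator .infected Z u τ) := by
  have := hZ.infected_stays u τ hτ
  have := hZ.explicit_stays u τ hτ
  have := hZ.infect_from_susceptible u τ hτ
  have := hZ.susceptible_or_isInfected_succ (u := u) hτ
  cases h : Z u τ <;> cases h' : Z u (τ + 1) <;> simp_all [transProb, stateIndicator]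

lemma prod_transProb_eq (p qu : ℝ) (u : V) :
    ∏ τ ∈ range t, transProb p qu (Z u τ) (Z u (τ + 1)) =
      (1 - p) ^ (∑ τ ∈ range t,
        if Z u τ = .susceptible ∧ Z u (τ + 1) = .susceptible then 1 else 0) *
      (p * qu) ^ (stateIndicator .explicitN Z u t - stateIndicator .explicitN Z u 0) *
      (p * (1 - qu)) ^ (stateIndicator .infected Z u t - stateIndicator .infected Z u 0) := by
  rw [prod_congr rfl fun τ hτ => hZ.transProb_eq p qu (mem_range.1 hτ), prod_mul_distrib,
    prod_mul_distrib, prod_pow_eq_pow_sum, prod_pow_eq_pow_sum, prod_pow_eq_pow_sum,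
    sum_range_tsub_of_le (f := stateIndicator .explicitN Z u) fun τ hτ =>
      hZ.stateIndicator_le_succ (Or.inr rfl) hτ,
    sum_range_tsub_of_le (f := stateIndicator .infected Z u) fun τ hτ =>
      hZ.stateIndicator_le_succ (Or.inl rfl) hτ]

lemma pow_stateIndicator_sub {s : NodeState} (hs : s.IsInfected) (x : ℝ) (u : V) :
    x ^ (stateIndicator s Z u t - stateIndicator s Z u 0) = if Z u t = s ∧ u ≠ v then x else 1 := by
  by_cases huv : u = v
  · subst huv
    simp [stateIndicator, hZ.state_source le_rfl]
  have h0 : stateIndicator s Z u 0 = 0 :=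
    if_neg fun (h : Z u 0 = s) => hZ.init_uninfected u huv (h ▸ hs)
  rw [h0]
  by_cases h : Z u t = s <;> simp [stateIndicator, h, huv]

lemma source_explicit_iff (hcons : ConsistentWith Ve t Z) : Z v 0 = .explicitN ↔ v ∈ Ve := by
  rw [← hZ.state_source le_rfl, hcons]

lemma mulSupport_prod_transProb_subset (hc : G.Connected) (p : ℝ) (q : V → ℝ) {F : Finset V}
    (hF : ∀ u, G.dist v u ≤ t + 1 → u ∈ F) :
    Function.mulSupport (fun u => ∏ τ ∈ range t, transProb p (q u) (Z u τ) (Z u (τ + 1))) ⊆ F := by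
  intro u hu
  by_contra huF
  refine hu (prod_eq_one fun τ hτ => ?_)
  have hfar : t + 1 < G.dist v u := by_contra fun h => huF (hF u (by omega))
  have hτ := mem_range.1 hτ
  rw [hZ.nonsusceptible_of_lt_dist hc hfar hτ.le, hZ.nonsusceptible_of_lt_dist hc hfar hτ]
  rfl

lemma sum_staysSusceptible_eq (hc : G.Connected) {F : Finset V}
    (hF : ∀ u, G.dist v u ≤ t + 1 → u ∈ F) {τ : ℕ} (hτ : τ < t) :
    ∑ u ∈ F, (if Z u τ = .susceptible ∧ Z u (τ + 1) = .susceptible then 1 else 0) =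
      (staysSusceptibleSet Z τ).ncard := by
  rw [sum_boole, Nat.cast_id, ← Set.ncard_coe_finset, coe_filter]
  congr 1
  ext u
  refine ⟨fun h => h.2, fun h => ⟨hF u ?_, h⟩⟩
  have := hZ.dist_le_of_susceptible hc hτ.le h.1
  omega

lemma pathProb_eq (hc : G.Connected) (hloc : ∀ u, (G.neighborSet u).Finite)
    (hVefin : Ve.Finite) (hcons : ConsistentWith Ve t Z) (p : ℝ) (q : V → ℝ) (J : Finset V)
    (hJ : ∀ u, u ∈ J ↔ Z u t = .infected ∧ u ≠ v) :
    pathProb p q v t Z =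
      (if v ∈ Ve then q v else 1 - q v) * (∏ u ∈ hVefin.toFinset.erase v, p * q u) *
        ((∏ u ∈ J, p * (1 - q u)) * (1 - p) ^ staysSusceptibleCount Z t) := by
  set F := (hc.finite_setOf_dist_le hloc v (t + 1)).toFinset
  have hF : ∀ u, G.dist v u ≤ t + 1 → u ∈ F := fun _ h => (Set.Finite.mem_toFinset _).2 h
  have hexp : F.filter (fun u => u ∈ Ve ∧ u ≠ v) = hVefin.toFinset.erase v := by
    ext u
    simp only [mem_filter, mem_erase, Set.Finite.mem_toFinset]
    refine ⟨fun h => ⟨h.2.2, h.2.1⟩, fun h => ⟨hF u ?_, h.2, h.1⟩⟩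
    have := hZ.dist_le_of_isInfected hc le_rfl (hcons.isInfected h.2)
    omega
  have hinf : F.filter (fun u => Z u t = .infected ∧ u ≠ v) = J := by
    ext u
    rw [mem_filter, hJ]
    refine ⟨fun h => h.2, fun h => ⟨hF u ?_, h⟩⟩
    have := hZ.dist_le_of_isInfected hc le_rfl (show (Z u t).IsInfected by simp [h.1])
    omega
  rw [pathProb,
    finprod_eq_prod_of_mulSupport_subset _ (hZ.mulSupport_prod_transProb_subset hc p q hF)]
  simp_rw [hZ.prod_transProb_eq, hZ.pow_stateIndicator_sub NodeState.isInfected_explicitN,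
    hZ.pow_stateIndicator_sub NodeState.isInfected_infected, hcons _, hZ.source_explicit_iff hcons]
  rw [prod_mul_distrib, prod_mul_distrib, prod_pow_eq_pow_sum, sum_comm,
    sum_congr rfl fun τ hτ => hZ.sum_staysSusceptible_eq hc hF (mem_range.1 hτ),
    ← prod_filter, ← prod_filter, hexp, hinf, staysSusceptibleCount]
  ring

lemma dbar_le (hc : G.Connected) (hVene : Ve.Nonempty) (hcons : ConsistentWith Ve t Z) :
    dbar G v Ve ≤ t :=
  csSup_le (hVene.image _) fun _ ⟨_, hw, hd⟩ =>
    hd ▸ hZ.dist_le_of_isInfected hc le_rfl (hcons.isInfected hw)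

/-- A node `u ≠ v` of the span has to be infected early enough for the infection to reach the
farthest explicit node behind it. -/
lemma isInfected_of_mem_spanVerts (hT : G.IsTree) (hVefin : Ve.Finite)
    (hcons : ConsistentWith Ve t Z) {u : V} (hu : u ∈ spanVerts G (Ve ∪ {v})) (huv : u ≠ v)
    {σ : ℕ} (hσ : t - dbar G u (subtreeAway G u v ∩ spanVerts G (Ve ∪ {v})) ≤ σ) (hσt : σ ≤ t) :
    (Z u σ).IsInfected := by
  obtain ⟨w, hw, huw, hd⟩ := exists_mem_dbar_subtreeAway_le hT hVefin hu huv
  exact hZ.isInfected_mono (by omega) hσt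
    (hZ.isInfected_of_between hT le_rfl (hcons.isInfected hw) huw)

lemma exists_finset_infected (hc : G.Connected) (hloc : ∀ u, (G.neighborSet u).Finite) :
    ∃ J : Finset V, ∀ u, u ∈ J ↔ Z u t = .infected ∧ u ≠ v := by
  have hfin : {u | Z u t = .infected ∧ u ≠ v}.Finite :=
    (hZ.infectedSet_finite hc hloc le_rfl).subset fun u hu => by simp [infectedSet, hu.1]
  exact ⟨hfin.toFinset, fun u => hfin.mem_toFinset⟩

lemma ncard_infectedSet_eq (hVefin : Ve.Finite) (hcons : ConsistentWith Ve t Z) {J : Finset V}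
    (hJ : ∀ u, u ∈ J ↔ Z u t = .infected ∧ u ≠ v) :
    (infectedSet Z t).ncard = J.card + (Ve ∪ {v}).ncard := by
  have hsplit : infectedSet Z t = ↑J ∪ (Ve ∪ {v}) := by
    ext u
    have hv := (NodeState.isInfected_iff _).1 (hZ.isInfected_source le_rfl)
    simp only [infectedSet, Set.mem_ofPred_eq, Set.mem_union, mem_coe, hJ, Set.mem_singleton_iff,
      ← hcons u, NodeState.isInfected_iff]
    by_cases huv : u = v
    · simp [huv, hv]
    · tauto
  have hdisj : Disjoint (↑J : Set V) (Ve ∪ {v}) := by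
    rw [Set.disjoint_left]
    rintro u hu (hVe | rfl)
    · have := (hcons u).2 hVe
      simp_all
    · simp_all
  rw [hsplit, Set.ncard_union_eq hdisj J.finite_toSet (hVefin.union (Set.finite_singleton v)),
    Set.ncard_coe_finset]

end IsInfectionPath

namespace IsLatestPath

variable (hX : IsLatestPath G Ve v (dbar G v Ve) X)
include hX

/-- The latest path infects each node of the span as late as any consistent path allows, so
after shifting time by `t - d̄(v, Ve)` its infected sets lie inside those of any other path. -/
lemma infectedSet_subset (hT : G.IsTree) (hVefin : Ve.Finite) (hY : Y ∈ pathsFor G Ve v t)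
    (hle : dbar G v Ve ≤ t) {τ : ℕ} (hτ : τ ≤ dbar G v Ve) :
    infectedSet X τ ⊆ infectedSet Y (τ + (t - dbar G v Ve)) := by
  intro u hu
  by_cases huv : u = v
  · subst huv
    exact hY.1.isInfected_source (by omega)
  have hspan : u ∈ spanVerts G (Ve ∪ {v}) := by_contra fun h => hX.2.2.1 u h τ hτ hu
  have hfirst : firstInfection X u ≤ τ := Nat.sInf_le hu
  rw [hX.2.2.2 u hspan huv] at hfirst
  have := dbar_subtreeAway_add_dist_le hT hVefin hspan
  refine hY.1.isInfected_of_mem_spanVerts hT hVefin hY.2 hspan huv ?_ (by omega)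
  omega

lemma sum_ncard_outerBoundary_le (hT : G.IsTree) (hloc : ∀ u, (G.neighborSet u).Finite)
    (hdeg : ∀ u, 2 ≤ (G.neighborSet u).ncard) (hVefin : Ve.Finite) (hY : Y ∈ pathsFor G Ve v t)
    (hle : dbar G v Ve ≤ t) :
    ∑ τ ∈ range (dbar G v Ve), (G.outerBoundary (infectedSet X τ)).ncard ≤
      ∑ τ ∈ range t, (G.outerBoundary (infectedSet Y τ)).ncard := by
  set k := t - dbar G v Ve
  calc ∑ τ ∈ range (dbar G v Ve), (G.outerBoundary (infectedSet X τ)).ncard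
      ≤ ∑ τ ∈ range (dbar G v Ve), (G.outerBoundary (infectedSet Y (k + τ))).ncard := by
        refine sum_le_sum fun τ hτ => ?_
        have hτ := mem_range.1 hτ
        rw [add_comm]
        exact (hX.1.isRootedSubtree_infectedSet hT hτ.le).ncard_outerBoundary_mono hT hloc hdeg
          (hY.1.isRootedSubtree_infectedSet hT (by omega))
          (hX.infectedSet_subset hT hVefin hY hle hτ.le)
          (hY.1.infectedSet_finite hT.connected hloc (by omega))
    _ ≤ ∑ τ ∈ range k, (G.outerBoundary (infectedSet Y τ)).ncard +
          ∑ τ ∈ range (dbar G v Ve), (G.outerBoundary (infectedSet Y (k + τ))).ncard :=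
        Nat.le_add_left _ _
    _ = ∑ τ ∈ range t, (G.outerBoundary (infectedSet Y τ)).ncard := by
        rw [← sum_range_add, Nat.sub_add_cancel hle]

lemma staysSusceptibleCount_add_card_le (hT : G.IsTree) (hloc : ∀ u, (G.neighborSet u).Finite)
    (hdeg : ∀ u, 2 ≤ (G.neighborSet u).ncard) (hVefin : Ve.Finite) (hY : Y ∈ pathsFor G Ve v t)
    (hle : dbar G v Ve ≤ t) {JX JY : Finset V}
    (hJX : ∀ u, u ∈ JX ↔ X u (dbar G v Ve) = .infected ∧ u ≠ v)
    (hJY : ∀ u, u ∈ JY ↔ Y u t = .infected ∧ u ≠ v) :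
    staysSusceptibleCount X (dbar G v Ve) + JX.card ≤ staysSusceptibleCount Y t + JY.card := by
  have hXid := hX.1.staysSusceptibleCount_add_ncard_infectedSet hT.connected hloc
  have hYid := hY.1.staysSusceptibleCount_add_ncard_infectedSet hT.connected hloc
  rw [hX.1.ncard_infectedSet_eq hVefin hX.2.1 hJX] at hXid
  rw [hY.1.ncard_infectedSet_eq hVefin hY.2 hJY] at hYid
  have := hX.sum_ncard_outerBoundary_le hT hloc hdeg hVefin hY hle
  omega

lemma infected_of_infected (hT : G.IsTree) (hVefin : Ve.Finite) (hY : Y ∈ pathsFor G Ve v t)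
    (hle : dbar G v Ve ≤ t) {u : V} (hu : X u (dbar G v Ve) = .infected) : Y u t = .infected := by
  have hYu := hX.infectedSet_subset hT hVefin hY hle le_rfl (show (X u _).IsInfected by simp [hu])
  rw [Nat.add_sub_cancel' hle] at hYu
  refine ((NodeState.isInfected_iff _).1 hYu).resolve_right fun hE => ?_
  have := (hX.2.1 u).2 ((hY.2 u).1 hE)
  simp_all

theorem pathProb_le (hT : G.IsTree) (hloc : ∀ u, (G.neighborSet u).Finite)
    (hdeg : ∀ u, 2 ≤ (G.neighborSet u).ncard) {p : ℝ} (hp0 : 0 < p) (hp1 : p < 1) {q : V → ℝ}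
    (hq0 : ∀ u, max 0 (2 - 1 / p) ≤ q u) (hq1 : ∀ u, q u ≤ 1) (hVene : Ve.Nonempty)
    (hVefin : Ve.Finite) (hY : Y ∈ pathsFor G Ve v t) :
    pathProb p q v t Y ≤ pathProb p q v (dbar G v Ve) X := by
  have hle := hY.1.dbar_le hT.connected hVene hY.2
  obtain ⟨JX, hJX⟩ := hX.1.exists_finset_infected hT.connected hloc
  obtain ⟨JY, hJY⟩ := hY.1.exists_finset_infected hT.connected hloc
  have hsub : JX ⊆ JY := fun u hu => by
    rw [hJX] at hu
    exact (hJY u).2 ⟨hX.infected_of_infected hT hVefin hY hle hu.1, hu.2⟩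
  have hq₀ : ∀ u, 0 ≤ q u := fun u => (le_max_left _ _).trans (hq0 u)
  rw [hX.1.pathProb_eq hT.connected hloc hVefin hX.2.1 p q JX hJX,
    hY.1.pathProb_eq hT.connected hloc hVefin hY.2 p q JY hJY]
  refine mul_le_mul_of_nonneg_left (prod_mul_pow_le_prod_mul_pow hsub
    (fun u _ => mul_nonneg hp0.le (by linarith [hq1 u]))
    (fun u _ => mul_one_sub_le_one_sub hp0 ((le_max_right _ _).trans (hq0 u)))
    (by linarith) (by linarith)
    (hX.staysSusceptibleCount_add_card_le hT hloc hdeg hVefin hY hle hJX hJY))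
    (mul_nonneg ?_ (prod_nonneg fun u _ => mul_nonneg hp0.le (hq₀ u)))
  split_ifs
  · exact hq₀ v
  · linarith [hq1 v]

end IsLatestPath

noncomputable def earliestPath (G : SimpleGraph V) (Ve : Set V) (v : V) : V → ℕ → NodeState :=
  fun u τ =>
    if u ∈ spanVerts G (Ve ∪ {v}) ∧ G.dist v u ≤ τ then
      if u ∈ Ve then .explicitN else .infected
    else if ∃ w, G.Adj u w ∧ w ∈ spanVerts G (Ve ∪ {v}) ∧ G.dist v w ≤ τ then .susceptible
    else .nonsusceptible

section earliestPath

variable {u : V} {τ : ℕ}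

lemma earliestPath_isInfected_iff :
    (earliestPath G Ve v u τ).IsInfected ↔ u ∈ spanVerts G (Ve ∪ {v}) ∧ G.dist v u ≤ τ := by
  unfold earliestPath
  split_ifs <;> simp_all

lemma earliestPath_eq_explicitN_iff : earliestPath G Ve v u τ = .explicitN ↔
    (u ∈ spanVerts G (Ve ∪ {v}) ∧ G.dist v u ≤ τ) ∧ u ∈ Ve := by
  unfold earliestPath
  split_ifs <;> simp_all

lemma earliestPath_eq_infected_iff : earliestPath G Ve v u τ = .infected ↔
    (u ∈ spanVerts G (Ve ∪ {v}) ∧ G.dist v u ≤ τ) ∧ u ∉ Ve := by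
  unfold earliestPath
  split_ifs <;> simp_all

lemma earliestPath_eq_susceptible_iff : earliestPath G Ve v u τ = .susceptible ↔
    ¬ (u ∈ spanVerts G (Ve ∪ {v}) ∧ G.dist v u ≤ τ) ∧
      ∃ w, G.Adj u w ∧ w ∈ spanVerts G (Ve ∪ {v}) ∧ G.dist v w ≤ τ := by
  unfold earliestPath
  split_ifs <;> simp_all

end earliestPath

lemma earliestPath_mem_pathsFor (hT : G.IsTree) (hVefin : Ve.Finite) :
    earliestPath G Ve v ∈ pathsFor G Ve v (dbar G v Ve) := by
  have hv : v ∈ Ve ∪ {v} := Or.inr rfl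
  refine ⟨⟨?_, ?_, ?_, ?_, ?_, ?_⟩, ?_⟩
  · exact earliestPath_isInfected_iff.2 ⟨mem_spanVerts_of_mem hv, by simp⟩
  · intro u huv h
    have := (earliestPath_isInfected_iff.1 h).2
    exact huv (hT.connected.dist_eq_zero_iff.1 (Nat.le_zero.1 this)).symm
  · intro u τ _ h
    rw [earliestPath_isInfected_iff] at h
    simp only [earliestPath_eq_susceptible_iff, earliestPath_isInfected_iff]
    tauto
  · intro u τ _ h
    rw [earliestPath_eq_infected_iff] at h ⊢
    exact ⟨⟨h.1.1, by omega⟩, h.2⟩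
  · intro u τ _ h
    rw [earliestPath_eq_explicitN_iff] at h ⊢
    exact ⟨⟨h.1.1, by omega⟩, h.2⟩
  · intro u τ _ h
    obtain ⟨hu, hdu⟩ := earliestPath_isInfected_iff.1 h
    by_cases hτ : G.dist v u ≤ τ
    · exact Or.inl (earliestPath_isInfected_iff.2 ⟨hu, hτ⟩)
    have huv : u ≠ v := by rintro rfl; simp at hτ
    obtain ⟨w, hadj, hw⟩ := hT.connected.exists_adj_dist_add_one huv
    have hws := mem_spanVerts_of_between hT hv hu (between_of_adj_of_dist_add_one hadj hw)
    exact Or.inr (earliestPath_eq_susceptible_iff.2 ⟨fun h => hτ h.2, w, hadj, hws, by omega⟩)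
  · intro u
    rw [earliestPath_eq_explicitN_iff]
    exact ⟨And.right, fun hu =>
      ⟨⟨mem_spanVerts_of_mem (Or.inl hu), dist_le_dbar hVefin (Or.inl hu)⟩, hu⟩⟩

end SILimited

open SILimited

theorem latest_path_at_infection_range_is_most_likely_for_v_general
    {V : Type*} (G : SimpleGraph V) (hT : G.IsTree)
    (hloc : ∀ u : V, (G.neighborSet u).Finite)
    (hdeg : ∀ u : V, 2 ≤ (G.neighborSet u).ncard)
    (p : ℝ) (hp0 : 0 < p) (hp1 : p < 1)
    (q : V → ℝ) (hq0 : ∀ u, max 0 (2 - 1 / p) ≤ q u) (hq1 : ∀ u, q u ≤ 1)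
    (Ve : Set V) (hVene : Ve.Nonempty) (hVefin : Ve.Finite)
    (v : V) :
    dbar G v Ve ∈ feasibleTimes G Ve v ∧
    ∀ X, IsLatestPath G Ve v (dbar G v Ve) X →
      ∀ t' ∈ feasibleTimes G Ve v, ∀ Y ∈ pathsFor G Ve v t',
        pathProb p q v t' Y ≤ pathProb p q v (dbar G v Ve) X :=
  ⟨⟨_, earliestPath_mem_pathsFor hT hVefin⟩, fun _ hX _ _ _ hY =>
    hX.pathProb_le hT hloc hdeg hp0 hp1 hq0 hq1 hVene hVefin hY⟩

/-- If `G` is a tree, then for any node `v`, the most likely elapsed time is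
`d̄(v, Ve)`, and a most likely infection path for `v` — maximizing `P_v` jointly over all
feasible elapsed times `t ∈ 𝒯_v` and all consistent infection paths — is the latest infection
path for `(v, d̄(v, Ve))`. -/
theorem latest_path_at_infection_range_is_most_likely_for_v
    {V : Type*} [Infinite V] (G : SimpleGraph V) (hT : G.IsTree)
    (hloc : ∀ u : V, (G.neighborSet u).Finite)
    (hdeg : ∀ u : V, 2 ≤ (G.neighborSet u).ncard)
    (p : ℝ) (hp0 : 0 < p) (hp1 : p < 1)
    (q : V → ℝ) (hq0 : ∀ u, max 0 (2 - 1 / p) ≤ q u) (hq1 : ∀ u, q u ≤ 1)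
    (Ve : Set V) (hVene : Ve.Nonempty) (hVefin : Ve.Finite)
    (v : V) :
    dbar G v Ve ∈ feasibleTimes G Ve v ∧
    ∀ X, IsLatestPath G Ve v (dbar G v Ve) X →
      ∀ t' ∈ feasibleTimes G Ve v, ∀ Y ∈ pathsFor G Ve v t',
        pathProb p q v t' Y ≤ pathProb p q v (dbar G v Ve) X :=
  latest_path_at_infection_range_is_most_likely_for_v_general G hT hloc hdeg p hp0 hp1 q hq0 hq1 Ve
    hVene hVefin v
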